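/- arXiv:2404.12515 — 2 statements merged into one kernel-verified Lean document; each statement's English description precedes it below -/
import Mathlib

section
/- Let G be a (bull, E)-free graph and let Q = v_1 v_2 v_3 v_4 v_5 v_1 be an induced 5-cycle in G which is a smallest induced odd cycle of G. If w ∈ A_i and w' ∈ A_{i+2} ∪ A_{i+3} ∪ B_i ∪ B_{i+3} ∪ C_i ∪ C_{i+1} ∪ C_{i+2} ∪ C_{i+3}, then ww' is not an edge of G. -/
/-!
Adjacent vertices `w ∈ A_i` and `w'` attached to `Q` induce, together with `Q`, a
seven-vertex graph determined by `N_Q(w')` alone. For each of the eight admissible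
neighbourhoods this graph contains an induced bull or `E`: for `w' ∈ B_i ∪ C_i`, say,
`v_{i-1} v_i w w' v_{i+2}` is a bull, and for `w' ∈ A_{i+2}` the vertex `v_i` is the
centre of an `E` with leaf `v_{i+1}` and legs `v_{i+4} v_{i+3}` and `w w'`. Each of these
finite checks is done by `decide`, uniformly in `i`.
-/

/-- `H` is contained in `G` as an induced subgraph. -/
def ContainsInduced {α β : Type*} (H : SimpleGraph α) (G : SimpleGraph β) : Prop :=
  ∃ f : α ↪ β, ∀ a b, G.Adj (f a) (f b) ↔ H.Adj a b

/-- The graph `E = S_{1,2,2}`: centre `0`, leaf `1`, and the paths `0 2 3` and `0 4 5`. -/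
def graphE : SimpleGraph (Fin 6) :=
  SimpleGraph.fromRel (fun a b =>
    ((a : ℕ), (b : ℕ)) ∈ [(0, 1), (0, 2), (2, 3), (0, 4), (4, 5)])

/-- The bull: a triangle `v2 v3 v4` with pendant edges `v1 v2` and `v4 v5`. -/
def bull : SimpleGraph (Fin 5) :=
  SimpleGraph.fromRel (fun a b =>
    ((a : ℕ), (b : ℕ)) ∈ [(0, 1), (1, 2), (2, 3), (3, 4), (1, 3)])

/-- `u : ZMod k → V` lists the vertices (in cyclic order) of an induced cycle of
length `k` in `G`. -/
def IsInducedCycle {V : Type*} (G : SimpleGraph V) {k : ℕ} (u : ZMod k → V) : Prop :=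
  Function.Injective u ∧ ∀ i j : ZMod k, G.Adj (u i) (u j) ↔ (j = i + 1 ∨ i = j + 1)

/-- `v : ZMod p → V` is a smallest induced odd cycle of `G` of length `p ≥ 5`:
an induced odd cycle of length `p ≥ 5` such that `G` has no induced odd cycle of
length `k` with `5 ≤ k < p`. -/
def IsSmallestInducedOddCycle {V : Type*} (G : SimpleGraph V) {p : ℕ}
    (v : ZMod p → V) : Prop :=
  5 ≤ p ∧ Odd p ∧ IsInducedCycle G v ∧
    ∀ k : ℕ, 5 ≤ k → k < p → Odd k → ∀ u : ZMod k → V, ¬ IsInducedCycle G u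

/-- `A_i`: the vertices outside the cycle `Q` whose neighbourhood on `Q` is
exactly `{v_i}`. -/
def setA {V : Type*} (G : SimpleGraph V) {p : ℕ} (v : ZMod p → V) (i : ZMod p) :
    Set V :=
  {w | w ∉ Set.range v ∧ ∀ j : ZMod p, G.Adj w (v j) ↔ j = i}

/-- `B_i`: the vertices outside the cycle `Q` whose neighbourhood on `Q` is
exactly `{v_i, v_{i+2}}`. -/
def setB {V : Type*} (G : SimpleGraph V) {p : ℕ} (v : ZMod p → V) (i : ZMod p) :
    Set V :=
  {w | w ∉ Set.range v ∧ ∀ j : ZMod p, G.Adj w (v j) ↔ (j = i ∨ j = i + 2)}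

/-- `C_i`: the vertices outside the cycle `Q` whose neighbourhood on `Q` is
exactly `{v_i, v_{i+1}, v_{i+2}}`. -/
def setC {V : Type*} (G : SimpleGraph V) {p : ℕ} (v : ZMod p → V) (i : ZMod p) :
    Set V :=
  {w | w ∉ Set.range v ∧ ∀ j : ZMod p, G.Adj w (v j) ↔ (j = i ∨ j = i + 1 ∨ j = i + 2)}

/-- `D_i`: the vertices outside the cycle `Q` whose neighbourhood on `Q` is
exactly `{v_i, v_{i+1}, v_{i+2}, v_{i+3}}`. -/
def setD {V : Type*} (G : SimpleGraph V) {p : ℕ} (v : ZMod p → V) (i : ZMod p) :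
    Set V :=
  {w | w ∉ Set.range v ∧
    ∀ j : ZMod p, G.Adj w (v j) ↔ (j = i ∨ j = i + 1 ∨ j = i + 2 ∨ j = i + 3)}

open SimpleGraph

theorem containsInduced_iff_isIndContained {α β : Type*} {H : SimpleGraph α}
    {G : SimpleGraph β} : ContainsInduced H G ↔ H ⊴ G :=
  ⟨fun ⟨f, hf⟩ => ⟨⟨f, hf _ _⟩⟩, fun ⟨f⟩ => ⟨f.toEmbedding, fun _ _ => f.map_rel_iff⟩⟩

instance : DecidableRel bull.Adj := fun a b =>
  decidable_of_iff' _ (fromRel_adj _ a b)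

instance : DecidableRel graphE.Adj := fun a b =>
  decidable_of_iff' _ (fromRel_adj _ a b)

theorem IsInducedCycle.adj_iff {V : Type*} {G : SimpleGraph V} {k : ℕ} {v : ZMod k → V}
    (hv : IsInducedCycle G v) (a b : ZMod k) :
    G.Adj (v a) (v b) ↔ a ≠ b ∧ (b = a + 1 ∨ a = b + 1) :=
  ⟨fun h => ⟨fun hab => h.ne (congrArg v hab), (hv.2 a b).1 h⟩, fun h => (hv.2 a b).2 h.2⟩

section CycleWithEdge

variable {k : ℕ} (P P' : ZMod k → Prop)

def cycleWithEdgeRel : ZMod k ⊕ Bool → ZMod k ⊕ Bool → Prop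
  | .inl a, .inl b => b = a + 1
  | .inl a, .inr false => P a
  | .inl a, .inr true => P' a
  | .inr _, .inl _ => False
  | .inr _, .inr _ => True

instance [DecidablePred P] [DecidablePred P'] : DecidableRel (cycleWithEdgeRel P P')
  | .inl a, .inl b => inferInstanceAs (Decidable (b = a + 1))
  | .inl a, .inr false => inferInstanceAs (Decidable (P a))
  | .inl a, .inr true => inferInstanceAs (Decidable (P' a))
  | .inr _, .inl _ => inferInstanceAs (Decidable False)
  | .inr _, .inr _ => inferInstanceAs (Decidable True)

/-- The cycle on `ZMod k` with an edge `w w'` attached to it, where `w = inr false` is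
adjacent to the cycle vertices satisfying `P` and `w' = inr true` to those satisfying `P'`. -/
def cycleWithEdge : SimpleGraph (ZMod k ⊕ Bool) :=
  fromRel (cycleWithEdgeRel P P')

instance [DecidablePred P] [DecidablePred P'] : DecidableRel (cycleWithEdge P P').Adj :=
  fun _ _ => inferInstanceAs (Decidable (_ ≠ _ ∧ (_ ∨ _)))

variable {P P'}

theorem cycleWithEdge_isIndContained {V : Type*} {G : SimpleGraph V} {v : ZMod k → V}
    (hv : IsInducedCycle G v) {w w' : V} (hw : w ∉ Set.range v) (hw' : w' ∉ Set.range v)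
    (hP : ∀ j, G.Adj w (v j) ↔ P j) (hP' : ∀ j, G.Adj w' (v j) ↔ P' j) (hww' : G.Adj w w') :
    cycleWithEdge P P' ⊴ G := by
  have hvw : ∀ j, v j ≠ w := fun j h => hw ⟨j, h⟩
  have hvw' : ∀ j, v j ≠ w' := fun j h => hw' ⟨j, h⟩
  have hPv : ∀ j, G.Adj (v j) w ↔ P j := fun j => G.adj_comm _ _ |>.trans (hP j)
  have hP'v : ∀ j, G.Adj (v j) w' ↔ P' j := fun j => G.adj_comm _ _ |>.trans (hP' j)
  let f : ZMod k ⊕ Bool → V := Sum.elim v fun b => bif b then w' else w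
  have hf : Function.Injective f := by
    rintro (a | _ | _) (b | _ | _) hab <;>
      simp_all [f, hv.1.eq_iff, hww'.ne, hww'.ne.symm, (hvw _).symm, (hvw' _).symm]
  refine ⟨⟨⟨f, hf⟩, fun {x y} => ?_⟩⟩
  rcases x with a | _ | _ <;> rcases y with b | _ | _ <;>
    simp [f, cycleWithEdge, cycleWithEdgeRel, hv.adj_iff, hP, hP', hPv, hP'v, hww', hww'.symm]

end CycleWithEdge

section FiveCycle

variable (i : ZMod 5)

theorem graphE_isIndContained_cycleWithEdge_A_add_two :
    graphE ⊴ cycleWithEdge (· = i) (· = i + 2) :=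
  ⟨⟨⟨![.inl i, .inl (i + 1), .inl (i + 4), .inl (i + 3), .inr false, .inr true],
    by revert i; decide⟩, by revert i; decide⟩⟩

theorem graphE_isIndContained_cycleWithEdge_A_add_three :
    graphE ⊴ cycleWithEdge (· = i) (· = i + 3) :=
  ⟨⟨⟨![.inl i, .inl (i + 4), .inl (i + 1), .inl (i + 2), .inr false, .inr true],
    by revert i; decide⟩, by revert i; decide⟩⟩

theorem bull_isIndContained_cycleWithEdge_B :
    bull ⊴ cycleWithEdge (· = i) (fun j => j = i ∨ j = i + 2) :=
  ⟨⟨⟨![.inl (i + 4), .inl i, .inr false, .inr true, .inl (i + 2)],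
    by revert i; decide⟩, by revert i; decide⟩⟩

theorem bull_isIndContained_cycleWithEdge_B_add_three :
    bull ⊴ cycleWithEdge (· = i) (fun j => j = i + 3 ∨ j = i + 3 + 2) :=
  ⟨⟨⟨![.inl (i + 1), .inl i, .inr false, .inr true, .inl (i + 3)],
    by revert i; decide⟩, by revert i; decide⟩⟩

theorem bull_isIndContained_cycleWithEdge_C :
    bull ⊴ cycleWithEdge (· = i) (fun j => j = i ∨ j = i + 1 ∨ j = i + 2) :=
  ⟨⟨⟨![.inl (i + 4), .inl i, .inr false, .inr true, .inl (i + 2)],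
    by revert i; decide⟩, by revert i; decide⟩⟩

theorem bull_isIndContained_cycleWithEdge_C_add_one :
    bull ⊴ cycleWithEdge (· = i) (fun j => j = i + 1 ∨ j = i + 1 + 1 ∨ j = i + 1 + 2) :=
  ⟨⟨⟨![.inr false, .inr true, .inl (i + 2), .inl (i + 3), .inl (i + 4)],
    by revert i; decide⟩, by revert i; decide⟩⟩

theorem bull_isIndContained_cycleWithEdge_C_add_two :
    bull ⊴ cycleWithEdge (· = i) (fun j => j = i + 2 ∨ j = i + 2 + 1 ∨ j = i + 2 + 2) :=
  ⟨⟨⟨![.inr false, .inr true, .inl (i + 3), .inl (i + 2), .inl (i + 1)],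
    by revert i; decide⟩, by revert i; decide⟩⟩

theorem bull_isIndContained_cycleWithEdge_C_add_three :
    bull ⊴ cycleWithEdge (· = i) (fun j => j = i + 3 ∨ j = i + 3 + 1 ∨ j = i + 3 + 2) :=
  ⟨⟨⟨![.inl (i + 1), .inl i, .inr false, .inr true, .inl (i + 3)],
    by revert i; decide⟩, by revert i; decide⟩⟩

end FiveCycle

theorem A_far_no_edges_general {V : Type*} (G : SimpleGraph V)
    (hbull : ¬ ContainsInduced bull G) (hE : ¬ ContainsInduced graphE G)
    (v : ZMod 5 → V) (hQ : IsSmallestInducedOddCycle G v)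
    (i : ZMod 5) (w w' : V) (hw : w ∈ setA G v i)
    (hw' : w' ∈ setA G v (i + 2) ∪ setA G v (i + 3) ∪ setB G v i ∪ setB G v (i + 3) ∪
      setC G v i ∪ setC G v (i + 1) ∪ setC G v (i + 2) ∪ setC G v (i + 3)) :
    ¬ G.Adj w w' := by
  rw [containsInduced_iff_isIndContained] at hbull hE
  intro hww'
  have hsub {P' : ZMod 5 → Prop} (hw'Q : w' ∉ Set.range v)
      (hP' : ∀ j, G.Adj w' (v j) ↔ P' j) : cycleWithEdge (· = i) P' ⊴ G :=
    cycleWithEdge_isIndContained hQ.2.2.1 hw.1 hw'Q hw.2 hP' hww'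
  rcases hw' with (((((((h | h) | h) | h) | h) | h) | h) | h) <;>
    have hQww' := hsub h.1 h.2
  · exact hE ((graphE_isIndContained_cycleWithEdge_A_add_two i).trans hQww')
  · exact hE ((graphE_isIndContained_cycleWithEdge_A_add_three i).trans hQww')
  · exact hbull ((bull_isIndContained_cycleWithEdge_B i).trans hQww')
  · exact hbull ((bull_isIndContained_cycleWithEdge_B_add_three i).trans hQww')
  · exact hbull ((bull_isIndContained_cycleWithEdge_C i).trans hQww')
  · exact hbull ((bull_isIndContained_cycleWithEdge_C_add_one i).trans hQww')
  · exact hbull ((bull_isIndContained_cycleWithEdge_C_add_two i).trans hQww')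
  · exact hbull ((bull_isIndContained_cycleWithEdge_C_add_three i).trans hQww')

/-- Let `G` be a `(bull, E)`-free graph and let `Q = v_1 … v_5 v_1` be an induced
5-cycle of `G` which is a smallest induced odd cycle of `G`.  If `w ∈ A_i` and
`w' ∈ A_{i+2} ∪ A_{i+3} ∪ B_i ∪ B_{i+3} ∪ C_i ∪ C_{i+1} ∪ C_{i+2} ∪ C_{i+3}`, then
`w w'` is not an edge of `G`. -/
theorem A_far_no_edges {V : Type*} [Fintype V] (G : SimpleGraph V)
    (hbull : ¬ ContainsInduced bull G) (hE : ¬ ContainsInduced graphE G)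
    (v : ZMod 5 → V) (hQ : IsSmallestInducedOddCycle G v)
    (i : ZMod 5) (w w' : V) (hw : w ∈ setA G v i)
    (hw' : w' ∈ setA G v (i + 2) ∪ setA G v (i + 3) ∪ setB G v i ∪ setB G v (i + 3) ∪
      setC G v i ∪ setC G v (i + 1) ∪ setC G v (i + 2) ∪ setC G v (i + 3)) :
    ¬ G.Adj w w' :=
  A_far_no_edges_general G hbull hE v hQ i w w' hw hw'
end

section
/- Let G be a bull-free graph and let Q = v_1 v_2 v_3 v_4 v_5 v_1 be an induced 5-cycle in G which is a smallest induced odd cycle of G. If w ∈ D_i and w' ∈ A_{i+1} ∪ A_{i+2} ∪ B_{i-1} ∪ B_i ∪ B_{i+1} ∪ B_{i+2}, then ww' is an edge of G. -/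
lemma bull_of {V : Type*} (G : SimpleGraph V) (a b c d e : V)
    (hab : G.Adj a b) (hbc : G.Adj b c) (hcd : G.Adj c d) (hde : G.Adj d e)
    (hbd : G.Adj b d)
    (hac : ¬ G.Adj a c) (had : ¬ G.Adj a d) (hae : ¬ G.Adj a e)
    (hbe : ¬ G.Adj b e) (hce : ¬ G.Adj c e) :
    ContainsInduced bull G := by
  have nab : a ≠ b := hab.ne
  have nbc : b ≠ c := hbc.ne
  have ncd : c ≠ d := hcd.ne
  have nde : d ≠ e := hde.ne
  have nbd : b ≠ d := hbd.ne
  have nac : a ≠ c := fun h => had (h ▸ hcd)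
  have nad : a ≠ d := fun h => hae (h ▸ hde)
  have nae : a ≠ e := fun h => hbe (h ▸ hab.symm)
  have nbe : b ≠ e := fun h => hce (h ▸ hbc.symm)
  have nce : c ≠ e := fun h => hbe (h ▸ hbc)
  have hba : G.Adj b a := hab.symm
  have hcb : G.Adj c b := hbc.symm
  have hdc : G.Adj d c := hcd.symm
  have hed : G.Adj e d := hde.symm
  have hdb : G.Adj d b := hbd.symm
  have hca : ¬ G.Adj c a := fun h => hac h.symm
  have hda : ¬ G.Adj d a := fun h => had h.symm
  have hea : ¬ G.Adj e a := fun h => hae h.symm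
  have heb : ¬ G.Adj e b := fun h => hbe h.symm
  have hec : ¬ G.Adj e c := fun h => hce h.symm
  refine ⟨⟨![a, b, c, d, e], ?_⟩, ?_⟩
  · intro x y hxy
    fin_cases x <;> fin_cases y <;> simp_all
  · intro x y
    show G.Adj (![a, b, c, d, e] x) (![a, b, c, d, e] y) ↔ _
    fin_cases x <;> fin_cases y <;>
      simp [bull, SimpleGraph.fromRel_adj, hab, hbc, hcd, hde, hbd,
        hba, hcb, hdc, hed, hdb, hac, had, hae, hbe, hce,
        hca, hda, hea, heb, hec] <;> decide

/-- Let `G` be a bull-free graph and let `Q = v_1 … v_5 v_1` be an induced 5-cycle of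
`G` which is a smallest induced odd cycle of `G`.  If `w ∈ D_i` and
`w' ∈ A_{i+1} ∪ A_{i+2} ∪ B_{i-1} ∪ B_i ∪ B_{i+1} ∪ B_{i+2}`, then `w w'` is an edge
of `G`. -/
theorem D_nbr_edges {V : Type*} [Fintype V] (G : SimpleGraph V)
    (hbull : ¬ ContainsInduced bull G)
    (v : ZMod 5 → V) (hQ : IsSmallestInducedOddCycle G v)
    (i : ZMod 5) (w w' : V) (hw : w ∈ setD G v i)
    (hw' : w' ∈ setA G v (i + 1) ∪ setA G v (i + 2) ∪ setB G v (i - 1) ∪ setB G v i ∪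
      setB G v (i + 1) ∪ setB G v (i + 2)) :
    G.Adj w w' := by
  obtain ⟨-, -, ⟨hvinj, hvadj⟩, -⟩ := hQ
  obtain ⟨-, hwadj⟩ := hw
  have hQ2 : ∀ a b : ZMod 5, G.Adj (v (i + a)) (v (i + b)) ↔ (b = a + 1 ∨ a = b + 1) := by
    intro a b
    rw [hvadj]
    simp only [add_assoc, add_right_inj]
  have hw2 : ∀ c : ZMod 5, G.Adj w (v (i + c)) ↔ (c = 0 ∨ c = 1 ∨ c = 2 ∨ c = 3) := by
    intro c
    rw [hwadj]
    simp only [add_eq_left, add_right_inj]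
  by_contra hn
  have hnw : ¬ G.Adj w' w := fun h => hn h.symm
  rcases hw' with ((((h | h) | h) | h) | h) | h
  · -- A_{i+1} : bull (w', v_{i+1}, w, v_i, v_{i+4})
    obtain ⟨-, ha⟩ := h
    have hw'2 : ∀ c : ZMod 5, G.Adj w' (v (i + c)) ↔ c = 1 := by
      intro c; rw [ha]; simp only [add_right_inj]
    exact hbull <| bull_of G w' (v (i+1)) w (v (i+0)) (v (i+4))
      ((hw'2 1).mpr rfl) (((hw2 1).mpr (by decide)).symm) ((hw2 0).mpr (by decide))
      ((hQ2 0 4).mpr (by decide)) ((hQ2 1 0).mpr (by decide))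
      hnw (fun h => absurd ((hw'2 0).mp h) (by decide))
      (fun h => absurd ((hw'2 4).mp h) (by decide))
      (fun h => absurd ((hQ2 1 4).mp h) (by decide))
      (fun h => absurd ((hw2 4).mp h) (by decide))
  · -- A_{i+2} : bull (w', v_{i+2}, w, v_{i+3}, v_{i+4})
    obtain ⟨-, ha⟩ := h
    have hw'2 : ∀ c : ZMod 5, G.Adj w' (v (i + c)) ↔ c = 2 := by
      intro c; rw [ha]; simp only [add_right_inj]
    exact hbull <| bull_of G w' (v (i+2)) w (v (i+3)) (v (i+4))
      ((hw'2 2).mpr rfl) (((hw2 2).mpr (by decide)).symm) ((hw2 3).mpr (by decide))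
      ((hQ2 3 4).mpr (by decide)) ((hQ2 2 3).mpr (by decide))
      hnw (fun h => absurd ((hw'2 3).mp h) (by decide))
      (fun h => absurd ((hw'2 4).mp h) (by decide))
      (fun h => absurd ((hQ2 2 4).mp h) (by decide))
      (fun h => absurd ((hw2 4).mp h) (by decide))
  · -- B_{i-1} = B_{i+4} : bull (w', v_{i+1}, v_i, w, v_{i+3})
    obtain ⟨-, ha⟩ := h
    have e1 : i - 1 = i + 4 := by
      rw [sub_eq_add_neg, show (-1 : ZMod 5) = 4 from by decide]
    have e2 : i + 4 + 2 = i + 1 := by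
      rw [add_assoc, show (4 : ZMod 5) + 2 = 1 from by decide]
    have hw'2 : ∀ c : ZMod 5, G.Adj w' (v (i + c)) ↔ (c = 4 ∨ c = 1) := by
      intro c; rw [ha, e1, e2]; simp only [add_right_inj]
    exact hbull <| bull_of G w' (v (i+1)) (v (i+0)) w (v (i+3))
      ((hw'2 1).mpr (by decide)) ((hQ2 1 0).mpr (by decide)) (((hw2 0).mpr (by decide)).symm)
      ((hw2 3).mpr (by decide)) (((hw2 1).mpr (by decide)).symm)
      (fun h => absurd ((hw'2 0).mp h) (by decide)) hnw
      (fun h => absurd ((hw'2 3).mp h) (by decide))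
      (fun h => absurd ((hQ2 1 3).mp h) (by decide))
      (fun h => absurd ((hQ2 0 3).mp h) (by decide))
  · -- B_i : bull (w', v_{i+2}, w, v_{i+3}, v_{i+4})
    obtain ⟨-, ha⟩ := h
    have hw'2 : ∀ c : ZMod 5, G.Adj w' (v (i + c)) ↔ (c = 0 ∨ c = 2) := by
      intro c; rw [ha]; simp only [add_eq_left, add_right_inj]
    exact hbull <| bull_of G w' (v (i+2)) w (v (i+3)) (v (i+4))
      ((hw'2 2).mpr (by decide)) (((hw2 2).mpr (by decide)).symm) ((hw2 3).mpr (by decide))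
      ((hQ2 3 4).mpr (by decide)) ((hQ2 2 3).mpr (by decide))
      hnw (fun h => absurd ((hw'2 3).mp h) (by decide))
      (fun h => absurd ((hw'2 4).mp h) (by decide))
      (fun h => absurd ((hQ2 2 4).mp h) (by decide))
      (fun h => absurd ((hw2 4).mp h) (by decide))
  · -- B_{i+1} : bull (w', v_{i+1}, w, v_i, v_{i+4})
    obtain ⟨-, ha⟩ := h
    have e2 : i + 1 + 2 = i + 3 := by
      rw [add_assoc, show (1 : ZMod 5) + 2 = 3 from by decide]
    have hw'2 : ∀ c : ZMod 5, G.Adj w' (v (i + c)) ↔ (c = 1 ∨ c = 3) := by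
      intro c; rw [ha, e2]; simp only [add_right_inj]
    exact hbull <| bull_of G w' (v (i+1)) w (v (i+0)) (v (i+4))
      ((hw'2 1).mpr (by decide)) (((hw2 1).mpr (by decide)).symm) ((hw2 0).mpr (by decide))
      ((hQ2 0 4).mpr (by decide)) ((hQ2 1 0).mpr (by decide))
      hnw (fun h => absurd ((hw'2 0).mp h) (by decide))
      (fun h => absurd ((hw'2 4).mp h) (by decide))
      (fun h => absurd ((hQ2 1 4).mp h) (by decide))
      (fun h => absurd ((hw2 4).mp h) (by decide))
  · -- B_{i+2} : bull (w', v_{i+2}, v_{i+3}, w, v_i)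
    obtain ⟨-, ha⟩ := h
    have e2 : i + 2 + 2 = i + 4 := by
      rw [add_assoc, show (2 : ZMod 5) + 2 = 4 from by decide]
    have hw'2 : ∀ c : ZMod 5, G.Adj w' (v (i + c)) ↔ (c = 2 ∨ c = 4) := by
      intro c; rw [ha, e2]; simp only [add_right_inj]
    exact hbull <| bull_of G w' (v (i+2)) (v (i+3)) w (v (i+0))
      ((hw'2 2).mpr (by decide)) ((hQ2 2 3).mpr (by decide)) (((hw2 3).mpr (by decide)).symm)
      ((hw2 0).mpr (by decide)) (((hw2 2).mpr (by decide)).symm)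
      (fun h => absurd ((hw'2 3).mp h) (by decide)) hnw
      (fun h => absurd ((hw'2 0).mp h) (by decide))
      (fun h => absurd ((hQ2 2 0).mp h) (by decide))
      (fun h => absurd ((hQ2 3 0).mp h) (by decide))
end
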